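/- If H is a weak Hopf algebra and g ∈ H is group-like, then g is invertible with inverse g^{-1} = S(g), where S is the antipode. -/

import Mathlib

open TensorProduct

noncomputable section

/-- The data of a (candidate) weak bialgebra over `k`: an associative unital
multiplication `mul` with unit `one`, a comultiplication `comul` and a counit `counit`. -/
structure WBData (k : Type) [CommRing k] (H : Type) [AddCommGroup H] [Module k H] where
  mul : H →ₗ[k] H →ₗ[k] H
  one : H
  comul : H →ₗ[k] H ⊗[k] H
  counit : H →ₗ[k] k

namespace WBData

variable {k : Type} [CommRing k] {H : Type} [AddCommGroup H] [Module k H] (W : WBData k H)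

/-- Multiplication as a map on the tensor product. -/
def mulT : H ⊗[k] H →ₗ[k] H := TensorProduct.lift W.mul

/-- The induced multiplication on `H ⊗ H`: `(a⊗b)·(c⊗d) = (ac)⊗(bd)`. -/
def mul₂ (x y : H ⊗[k] H) : H ⊗[k] H :=
  TensorProduct.map W.mulT W.mulT (TensorProduct.tensorTensorTensorComm k H H H H (x ⊗ₜ[k] y))

/-- The source counital map `ε_s(h) = 1' ε(h 1'')`. -/
def εsMap : H →ₗ[k] H :=
  (TensorProduct.lid k H).toLinearMap
    ∘ₗ LinearMap.rTensor H (W.counit ∘ₗ W.mulT)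
    ∘ₗ (TensorProduct.assoc k H H H).symm.toLinearMap
    ∘ₗ (TensorProduct.mk k H (H ⊗[k] H)).flip ((TensorProduct.comm k H H) (W.comul W.one))

/-- The target counital map `ε_t(h) = ε(1' h) 1''`. -/
def εtMap : H →ₗ[k] H :=
  (TensorProduct.rid k H).toLinearMap
    ∘ₗ LinearMap.lTensor H (W.counit ∘ₗ W.mulT)
    ∘ₗ (TensorProduct.assoc k H H H).toLinearMap
    ∘ₗ (TensorProduct.mk k (H ⊗[k] H) H) ((TensorProduct.comm k H H) (W.comul W.one))

/-- The map `\bar ε_s(h) = 1' ε(1'' h)`. -/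
def barεsMap : H →ₗ[k] H :=
  (TensorProduct.rid k H).toLinearMap
    ∘ₗ LinearMap.lTensor H (W.counit ∘ₗ W.mulT)
    ∘ₗ (TensorProduct.assoc k H H H).toLinearMap
    ∘ₗ (TensorProduct.mk k (H ⊗[k] H) H) (W.comul W.one)

/-- The source base algebra `H_s = ε_s(H)`. -/
def Hs : Submodule k H := LinearMap.range W.εsMap

/-- The target base algebra `H_t = ε_t(H)`. -/
def Ht : Submodule k H := LinearMap.range W.εtMap

/-- The axioms of a weak bialgebra for the data `W`. -/
structure IsWeakBialgebra : Prop where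
  mul_assoc : ∀ x y z : H, W.mul (W.mul x y) z = W.mul x (W.mul y z)
  one_mul : ∀ x : H, W.mul W.one x = x
  mul_one : ∀ x : H, W.mul x W.one = x
  coassoc : ∀ x : H,
    (TensorProduct.assoc k H H H) (LinearMap.rTensor H W.comul (W.comul x)) =
      LinearMap.lTensor H W.comul (W.comul x)
  counit_left : ∀ x : H,
    (TensorProduct.lid k H) (LinearMap.rTensor H W.counit (W.comul x)) = x
  counit_right : ∀ x : H,
    (TensorProduct.rid k H) (LinearMap.lTensor H W.counit (W.comul x)) = x
  comul_mul : ∀ x y : H, W.comul (W.mul x y) = W.mul₂ (W.comul x) (W.comul y)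
  counit_mul : ∀ x y z : H, W.counit (W.mul (W.mul x y) z) =
    (LinearMap.mul' k k)
      (TensorProduct.map (W.counit ∘ₗ W.mul x) (W.counit ∘ₗ W.mul.flip z) (W.comul y))
  counit_mul_op : ∀ x y z : H, W.counit (W.mul (W.mul x y) z) =
    (LinearMap.mul' k k)
      (TensorProduct.map (W.counit ∘ₗ W.mul x) (W.counit ∘ₗ W.mul.flip z)
        ((TensorProduct.comm k H H) (W.comul y)))
  comul_one : LinearMap.rTensor H W.comul (W.comul W.one) =
    (LinearMap.rTensor H (TensorProduct.comm k H H).toLinearMap)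
      ((TensorProduct.assoc k H H H).symm
        ((TensorProduct.map W.mulT LinearMap.id)
          ((TensorProduct.tensorTensorTensorComm k H H H H)
            (((TensorProduct.comm k H H) (W.comul W.one)) ⊗ₜ[k] (W.comul W.one)))))
  comul_one_op : LinearMap.rTensor H W.comul (W.comul W.one) =
    (LinearMap.rTensor H (TensorProduct.comm k H H).toLinearMap)
      ((TensorProduct.assoc k H H H).symm
        ((TensorProduct.map (W.mulT ∘ₗ (TensorProduct.comm k H H).toLinearMap) LinearMap.id)
          ((TensorProduct.tensorTensorTensorComm k H H H H)
            (((TensorProduct.comm k H H) (W.comul W.one)) ⊗ₜ[k] (W.comul W.one)))))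

/-- `g` is right group-like: `Δ g = (g⊗g)·Δ1` and `ε_s(g) = 1`. -/
def IsRightGroupLike (g : H) : Prop :=
  W.comul g = W.mul₂ (g ⊗ₜ[k] g) (W.comul W.one) ∧ W.εsMap g = W.one

/-- `g` is left group-like: `Δ g = Δ1·(g⊗g)` and `ε_t(g) = 1`. -/
def IsLeftGroupLike (g : H) : Prop :=
  W.comul g = W.mul₂ (W.comul W.one) (g ⊗ₜ[k] g) ∧ W.εtMap g = W.one

/-- `g` is group-like if it is both right and left group-like. -/
def IsGroupLike (g : H) : Prop := W.IsRightGroupLike g ∧ W.IsLeftGroupLike g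

/-- The coaction `x ↦ x' ⊗ (g x'')` of `H` on (the ambient space of) `H_s`,
defining the comodule `H_s^g` for a group-like `g`. -/
def βg (g : H) : H →ₗ[k] H ⊗[k] H :=
  LinearMap.lTensor H (W.mul g) ∘ₗ W.comul

/-- A coaction `β : V → V ⊗ H` is a (right) comodule structure if it is coassociative and
counital. -/
def IsCoaction {V : Type} [AddCommGroup V] [Module k V] (β : V →ₗ[k] V ⊗[k] H) : Prop :=
  (∀ v : V, (TensorProduct.assoc k V H H) (LinearMap.rTensor H β (β v)) =
      LinearMap.lTensor V W.comul (β v)) ∧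
  (∀ v : V, (TensorProduct.rid k V) (LinearMap.lTensor V W.counit (β v)) = v)

/-- The truncation idempotent `P_{V,W}(v⊗w) = (v₀⊗w₀) ε(v₁w₁)` of two comodules, expressed
on the ambient tensor product. -/
def truncP {V U : Type} [AddCommGroup V] [Module k V] [AddCommGroup U] [Module k U]
    (βa : V →ₗ[k] V ⊗[k] H) (βb : U →ₗ[k] U ⊗[k] H) : V ⊗[k] U →ₗ[k] V ⊗[k] U :=
  (TensorProduct.rid k (V ⊗[k] U)).toLinearMap
    ∘ₗ LinearMap.lTensor (V ⊗[k] U) (W.counit ∘ₗ W.mulT)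
    ∘ₗ (TensorProduct.tensorTensorTensorComm k V H U H).toLinearMap
    ∘ₗ TensorProduct.map βa βb

/-- The coaction `v⊗w ↦ (v₀⊗w₀)⊗(v₁w₁)` on the (truncated) tensor product of two comodules,
expressed on the ambient tensor product. -/
def βtens {V U : Type} [AddCommGroup V] [Module k V] [AddCommGroup U] [Module k U]
    (βa : V →ₗ[k] V ⊗[k] H) (βb : U →ₗ[k] U ⊗[k] H) : V ⊗[k] U →ₗ[k] (V ⊗[k] U) ⊗[k] H :=
  LinearMap.lTensor (V ⊗[k] U) W.mulT
    ∘ₗ (TensorProduct.tensorTensorTensorComm k V H U H).toLinearMap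
    ∘ₗ TensorProduct.map βa βb

/-- The two-sided ideal (with respect to `W.mul`) generated by a set `s`. -/
def twoSidedIdeal (s : Set H) : Submodule k H :=
  sInf {J : Submodule k H | s ⊆ J ∧ ∀ x : H, ∀ y ∈ J, W.mul x y ∈ J ∧ W.mul y x ∈ J}

/-- Powers of an element with respect to `W.mul`. -/
def powW (g : H) : ℕ → H
  | 0 => W.one
  | n + 1 => W.mul (powW g n) g

/-- An antipode for `W`, making it a weak Hopf algebra. -/
def IsAntipode (S : H →ₗ[k] H) : Prop :=
  (∀ x : H, W.mulT (LinearMap.lTensor H S (W.comul x)) = W.εtMap x) ∧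
  (∀ x : H, W.mulT (LinearMap.rTensor H S (W.comul x)) = W.εsMap x) ∧
  (∀ x : H, W.mulT (LinearMap.lTensor H S
      (LinearMap.rTensor H (W.mulT ∘ₗ LinearMap.rTensor H S)
        (LinearMap.rTensor H W.comul (W.comul x)))) = S x)

end WBData

/-- A homomorphism of weak bialgebras: a linear map which is a homomorphism of unital
algebras and of counital coalgebras. -/
def IsWBHom {k : Type} [CommRing k] {H H' : Type} [AddCommGroup H] [Module k H]
    [AddCommGroup H'] [Module k H'] (W : WBData k H) (W' : WBData k H')
    (f : H →ₗ[k] H') : Prop :=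
  (∀ x y : H, f (W.mul x y) = W'.mul (f x) (f y)) ∧
  f W.one = W'.one ∧
  (∀ x : H, W'.comul (f x) = TensorProduct.map f f (W.comul x)) ∧
  (∀ x : H, W'.counit (f x) = W.counit x)

end

/-!
If `Δg = (g ⊗ g)Δ1`, then `Δ(g x) = (g ⊗ g)Δ1 Δx = (g ⊗ g)Δx`, so left multiplication by `g`
intertwines `Δ`, and `(Δ ⊗ id)Δg` is `(Δ ⊗ id)Δ1 = (Δ1 ⊗ 1)(1 ⊗ Δ1)` with every leg multiplied
by `g`. The axiom `S(g₁) g₂ S(g₃) = S(g)` then factors as `ε_s(g) · 1' S(g 1'')`, so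
`S(g) = 1' S(g 1'')` and `g S(g) = ε_t(g) = 1`. The identity `S(g) g = 1` is the mirror image,
using `Δg = Δ1 (g ⊗ g)`.
-/

namespace WBData

open LinearMap

variable {k : Type} [CommRing k] {H : Type} [AddCommGroup H] [Module k H] (W : WBData k H)

theorem mulT_tmul (x y : H) : W.mulT (x ⊗ₜ[k] y) = W.mul x y := rfl

theorem mul₂_tmul_left (a b : H) (y : H ⊗[k] H) :
    W.mul₂ (a ⊗ₜ[k] b) y = map (W.mul a) (W.mul b) y := by
  induction y using TensorProduct.induction_on with
  | zero => simp [mul₂]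
  | tmul c d => simp [mul₂, mulT_tmul]
  | add y y' hy hy' => simp_all [mul₂, tmul_add]

theorem mul₂_tmul_right (x : H ⊗[k] H) (a b : H) :
    W.mul₂ x (a ⊗ₜ[k] b) = map (W.mul.flip a) (W.mul.flip b) x := by
  induction x using TensorProduct.induction_on with
  | zero => simp [mul₂]
  | tmul c d => simp [mul₂, mulT_tmul]
  | add x x' hx hx' => simp_all [mul₂, add_tmul]

theorem mul₂_assoc (hW : W.IsWeakBialgebra) (x y z : H ⊗[k] H) :
    W.mul₂ (W.mul₂ x y) z = W.mul₂ x (W.mul₂ y z) := by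
  induction x using TensorProduct.induction_on with
  | zero => simp [mul₂]
  | add x x' hx hx' => simp_all [mul₂, add_tmul]
  | tmul a b =>
    induction y using TensorProduct.induction_on with
    | zero => simp [mul₂]
    | add y y' hy hy' => simp_all [mul₂, add_tmul, tmul_add]
    | tmul c d =>
      induction z using TensorProduct.induction_on with
      | zero => simp [mul₂]
      | add z z' hz hz' => simp_all [mul₂, tmul_add]
      | tmul e f => simp [mul₂, mulT_tmul, hW.mul_assoc]

theorem sum_sum_mul {ι κ : Type} (s : Finset ι) (t : Finset κ) (a : ι → H) (b : κ → H) :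
    ∑ i ∈ s, ∑ j ∈ t, W.mul (a i) (b j) = W.mul (∑ i ∈ s, a i) (∑ j ∈ t, b j) := by
  rw [map_sum₂]
  simp only [map_sum]

theorem comul_mul_left_eq_map (hW : W.IsWeakBialgebra) {g : H}
    (hg : W.comul g = W.mul₂ (g ⊗ₜ[k] g) (W.comul W.one)) (x : H) :
    W.comul (W.mul g x) = map (W.mul g) (W.mul g) (W.comul x) := by
  rw [hW.comul_mul, hg, W.mul₂_assoc hW, ← hW.comul_mul, hW.one_mul, mul₂_tmul_left]

theorem comul_mul_right_eq_map (hW : W.IsWeakBialgebra) {g : H}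
    (hg : W.comul g = W.mul₂ (W.comul W.one) (g ⊗ₜ[k] g)) (x : H) :
    W.comul (W.mul x g) = map (W.mul.flip g) (W.mul.flip g) (W.comul x) := by
  rw [hW.comul_mul, hg, ← W.mul₂_assoc hW, ← hW.comul_mul, hW.mul_one, mul₂_tmul_right]

theorem comul_eq_sum_mul_left {g : H} (hg : W.comul g = W.mul₂ (g ⊗ₜ[k] g) (W.comul W.one))
    {F : Finset (H × H)} (hF : W.comul W.one = ∑ p ∈ F, p.1 ⊗ₜ[k] p.2) :
    W.comul g = ∑ p ∈ F, W.mul g p.1 ⊗ₜ[k] W.mul g p.2 := by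
  simp [hg, hF, mul₂_tmul_left, map_sum]

theorem comul_eq_sum_mul_right {g : H} (hg : W.comul g = W.mul₂ (W.comul W.one) (g ⊗ₜ[k] g))
    {F : Finset (H × H)} (hF : W.comul W.one = ∑ p ∈ F, p.1 ⊗ₜ[k] p.2) :
    W.comul g = ∑ p ∈ F, W.mul p.1 g ⊗ₜ[k] W.mul p.2 g := by
  simp [hg, hF, mul₂_tmul_right, map_sum]

theorem rTensor_comul_comul_of_comul_eq_map {T : H →ₗ[k] H}
    (hT : ∀ x, W.comul (T x) = map T T (W.comul x)) (x : H) :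
    rTensor H W.comul (W.comul (T x)) = map (map T T) T (rTensor H W.comul (W.comul x)) := by
  have hT' : W.comul ∘ₗ T = map T T ∘ₗ W.comul := LinearMap.ext hT
  rw [hT, ← LinearMap.comp_apply (rTensor H W.comul), rTensor_comp_map, hT', ← map_comp_rTensor,
    LinearMap.comp_apply]

theorem rTensor_comul_comul_one (hW : W.IsWeakBialgebra) {F : Finset (H × H)}
    (hF : W.comul W.one = ∑ p ∈ F, p.1 ⊗ₜ[k] p.2) :
    rTensor H W.comul (W.comul W.one) =
      ∑ p ∈ F, ∑ q ∈ F, (p.1 ⊗ₜ[k] W.mul p.2 q.1) ⊗ₜ[k] q.2 := by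
  rw [hW.comul_one, hF, Finset.sum_comm]
  simp [map_sum, sum_tmul, tmul_sum, mulT_tmul]

theorem εtMap_eq_sum {S : H →ₗ[k] H} (hS : W.IsAntipode S) {ι : Type} {s : Finset ι}
    {a b : ι → H} {x : H} (hx : W.comul x = ∑ i ∈ s, a i ⊗ₜ[k] b i) :
    W.εtMap x = ∑ i ∈ s, W.mul (a i) (S (b i)) := by
  simp [← hS.1, hx, map_sum, mulT_tmul]

theorem εsMap_eq_sum {S : H →ₗ[k] H} (hS : W.IsAntipode S) {ι : Type} {s : Finset ι}
    {a b : ι → H} {x : H} (hx : W.comul x = ∑ i ∈ s, a i ⊗ₜ[k] b i) :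
    W.εsMap x = ∑ i ∈ s, W.mul (S (a i)) (b i) := by
  simp [← hS.2.1, hx, map_sum, mulT_tmul]

theorem antipode_apply_eq_sum (hW : W.IsWeakBialgebra) {S : H →ₗ[k] H} (hS : W.IsAntipode S)
    {F : Finset (H × H)} (hF : W.comul W.one = ∑ p ∈ F, p.1 ⊗ₜ[k] p.2) {T : H →ₗ[k] H}
    (hT : ∀ x, W.comul (T x) = map T T (W.comul x)) :
    S (T W.one) = ∑ p ∈ F, ∑ q ∈ F,
      W.mul (W.mul (S (T p.1)) (T (W.mul p.2 q.1))) (S (T q.2)) := by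
  rw [← hS.2.2, W.rTensor_comul_comul_of_comul_eq_map hT, W.rTensor_comul_comul_one hW hF]
  simp [map_sum, mulT_tmul]

theorem antipode_eq_sum_mul_antipode (hW : W.IsWeakBialgebra) {S : H →ₗ[k] H}
    (hS : W.IsAntipode S) {F : Finset (H × H)} (hF : W.comul W.one = ∑ p ∈ F, p.1 ⊗ₜ[k] p.2)
    {g : H} (hg : W.IsRightGroupLike g) :
    S g = ∑ q ∈ F, W.mul q.1 (S (W.mul g q.2)) := by
  have hT := W.comul_mul_left_eq_map hW hg.1
  have hεs : ∑ p ∈ F, W.mul (S (W.mul g p.1)) (W.mul g p.2) = W.one := by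
    rw [← W.εsMap_eq_sum hS (W.comul_eq_sum_mul_left hg.1 hF), hg.2]
  calc S g = S (W.mul g W.one) := by rw [hW.mul_one]
    _ = ∑ p ∈ F, ∑ q ∈ F, W.mul (W.mul (S (W.mul g p.1)) (W.mul g (W.mul p.2 q.1)))
          (S (W.mul g q.2)) := W.antipode_apply_eq_sum hW hS hF hT
    _ = ∑ p ∈ F, ∑ q ∈ F, W.mul (W.mul (S (W.mul g p.1)) (W.mul g p.2))
          (W.mul q.1 (S (W.mul g q.2))) := by simp only [hW.mul_assoc]
    _ = ∑ q ∈ F, W.mul q.1 (S (W.mul g q.2)) := by rw [sum_sum_mul, hεs, hW.one_mul]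

theorem antipode_eq_sum_antipode_mul (hW : W.IsWeakBialgebra) {S : H →ₗ[k] H}
    (hS : W.IsAntipode S) {F : Finset (H × H)} (hF : W.comul W.one = ∑ p ∈ F, p.1 ⊗ₜ[k] p.2)
    {g : H} (hg : W.IsLeftGroupLike g) :
    S g = ∑ p ∈ F, W.mul (S (W.mul p.1 g)) p.2 := by
  have hT := W.comul_mul_right_eq_map hW hg.1
  have hεt : ∑ q ∈ F, W.mul (W.mul q.1 g) (S (W.mul q.2 g)) = W.one := by
    rw [← W.εtMap_eq_sum hS (W.comul_eq_sum_mul_right hg.1 hF), hg.2]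
  calc S g = S (W.mul.flip g W.one) := by rw [flip_apply, hW.one_mul]
    _ = ∑ p ∈ F, ∑ q ∈ F, W.mul (W.mul (S (W.mul p.1 g)) (W.mul (W.mul p.2 q.1) g))
          (S (W.mul q.2 g)) := W.antipode_apply_eq_sum hW hS hF hT
    _ = ∑ p ∈ F, ∑ q ∈ F, W.mul (W.mul (S (W.mul p.1 g)) p.2)
          (W.mul (W.mul q.1 g) (S (W.mul q.2 g))) := by simp only [hW.mul_assoc]
    _ = ∑ p ∈ F, W.mul (S (W.mul p.1 g)) p.2 := by rw [sum_sum_mul, hεt, hW.mul_one]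

end WBData

/-- If `H` is a weak Hopf algebra and `g ∈ H` is group-like, then `g` is
invertible with inverse `g⁻¹ = S(g)`, where `S` is the antipode. -/
theorem grouplike_inverse_antipode {k : Type} [Field k] {H : Type} [AddCommGroup H] [Module k H]
    (W : WBData k H) (hW : W.IsWeakBialgebra) (S : H →ₗ[k] H) (hS : W.IsAntipode S)
    (g : H) (hg : W.IsGroupLike g) :
    W.mul g (S g) = W.one ∧ W.mul (S g) g = W.one := by
  obtain ⟨hgR, hgL⟩ := hg
  obtain ⟨F, hF⟩ := TensorProduct.exists_finset (W.comul W.one)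
  constructor
  · calc W.mul g (S g) = ∑ q ∈ F, W.mul (W.mul g q.1) (S (W.mul g q.2)) := by
          rw [W.antipode_eq_sum_mul_antipode hW hS hF hgR, map_sum]
          simp only [hW.mul_assoc]
      _ = W.εtMap g := (W.εtMap_eq_sum hS (W.comul_eq_sum_mul_left hgR.1 hF)).symm
      _ = W.one := hgL.2
  · calc W.mul (S g) g = ∑ p ∈ F, W.mul (S (W.mul p.1 g)) (W.mul p.2 g) := by
          rw [W.antipode_eq_sum_antipode_mul hW hS hF hgL, LinearMap.map_sum₂]
          simp only [hW.mul_assoc]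
      _ = W.εsMap g := (W.εsMap_eq_sum hS (W.comul_eq_sum_mul_right hgL.1 hF)).symm
      _ = W.one := hgR.2
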